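/- Fix constants beta >= 0, c_lam > 0, beta_bar_S > 0, beta_bar_I >= 0, beta_bar_R > 0, c_Inf, c_I, gamma, eta >= 0, and lam_bar in R^3; fix pi, y in R^3 with pi_S > 0. Let H_tilde(alpha_t, lam_S, lam_I, lam_R) := (y_I - y_S) * beta * lam_I * alpha_t * pi_I * pi_S + (y_R - y_I) * gamma + (y_S - y_R) * eta + c_Inf * pi_I^2 + (beta_bar_S/2)(lam_S - lam_bar_S)^2 + (beta_bar_I/2)(lam_I - lam_bar_I)^2 + (beta_bar_R/2)(lam_R - lam_bar_R)^2 + (c_lam/2)(lam_S - alpha_t)^2 * pi_S + c_I * pi_I. Then at any critical point (alpha_t, lam_S, lam_I, lam_R) of H_tilde the following explicit relations hold: (i) lam_R = lam_bar_R; (ii) alpha_t = lam_S + (beta * lam_I * pi_I / c_lam) * (y_S - y_I); (iii) lam_S = lam_bar_S + (beta / beta_bar_S) * lam_I * (y_S - y_I) * pi_I * pi_S; (iv) beta_bar_I * (lam_I - lam_bar_I) = - beta * alpha_t * (y_I - y_S) * pi_I * pi_S. -/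

import Mathlib

/-! In each variable separately `H` is a quadratic polynomial, so each partial derivative is
affine and its vanishing is a linear equation. Dividing the `alpha`-equation by `π_S > 0` gives
(ii), which substituted into the `λ_S`-equation gives (iii); (i) and (iv) are the `λ_R`- and
`λ_I`-equations themselves. -/

theorem HasDerivAt.two_mul_add_eq_zero_of_quadratic {f : ℝ → ℝ} {a b x : ℝ}
    (hf : ∀ t, f t = a * t ^ 2 + b * t + f 0) (h : HasDerivAt f 0 x) :
    2 * a * x + b = 0 := by
  have hquad : HasDerivAt (fun t => a * t ^ 2 + b * t + f 0)
      (a * ((2 : ℕ) * x ^ (2 - 1)) + b * 1) x :=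
    (((hasDerivAt_pow 2 x).const_mul a).add ((hasDerivAt_id x).const_mul b)).add_const (f 0)
  rw [funext hf] at h
  linear_combination -(h.unique hquad)

theorem sir_stackelberg_critical_point_relations_general
    (beta c_lam bbar_S bbar_I bbar_R c_Inf c_I gamma eta : ℝ)
    (hclam : 0 < c_lam)
    (hbS : 0 < bbar_S) (hbR : 0 < bbar_R)
    (lbar_S lbar_I lbar_R : ℝ)
    (pi_S pi_I y_S y_I y_R : ℝ) (hpiS : 0 < pi_S)
    (H : ℝ → ℝ → ℝ → ℝ → ℝ)
    (hH : ∀ alpha lam_S lam_I lam_R : ℝ,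
      H alpha lam_S lam_I lam_R
        = (y_I - y_S) * beta * lam_I * alpha * pi_I * pi_S
          + (y_R - y_I) * gamma + (y_S - y_R) * eta + c_Inf * pi_I ^ 2
          + (bbar_S / 2) * (lam_S - lbar_S) ^ 2
          + (bbar_I / 2) * (lam_I - lbar_I) ^ 2
          + (bbar_R / 2) * (lam_R - lbar_R) ^ 2
          + (c_lam / 2) * (lam_S - alpha) ^ 2 * pi_S + c_I * pi_I)
    (alpha_t lam_S lam_I lam_R : ℝ)
    (hcrit1 : HasDerivAt (fun t => H t lam_S lam_I lam_R) 0 alpha_t)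
    (hcrit2 : HasDerivAt (fun t => H alpha_t t lam_I lam_R) 0 lam_S)
    (hcrit3 : HasDerivAt (fun t => H alpha_t lam_S t lam_R) 0 lam_I)
    (hcrit4 : HasDerivAt (fun t => H alpha_t lam_S lam_I t) 0 lam_R) :
    lam_R = lbar_R ∧
    alpha_t = lam_S + (beta * lam_I * pi_I / c_lam) * (y_S - y_I) ∧
    lam_S = lbar_S + (beta / bbar_S) * lam_I * (y_S - y_I) * pi_I * pi_S ∧
    bbar_I * (lam_I - lbar_I) = - (beta * alpha_t * (y_I - y_S) * pi_I * pi_S) := by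
  have hα := hcrit1.two_mul_add_eq_zero_of_quadratic (a := c_lam / 2 * pi_S)
    (b := (y_I - y_S) * beta * lam_I * pi_I * pi_S - c_lam * lam_S * pi_S)
    (fun t => by rw [hH, hH]; ring)
  have hS := hcrit2.two_mul_add_eq_zero_of_quadratic (a := bbar_S / 2 + c_lam / 2 * pi_S)
    (b := -(bbar_S * lbar_S) - c_lam * alpha_t * pi_S) (fun t => by rw [hH, hH]; ring)
  have hI := hcrit3.two_mul_add_eq_zero_of_quadratic (a := bbar_I / 2)
    (b := (y_I - y_S) * beta * alpha_t * pi_I * pi_S - bbar_I * lbar_I)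
    (fun t => by rw [hH, hH]; ring)
  have hR := hcrit4.two_mul_add_eq_zero_of_quadratic (a := bbar_R / 2) (b := -(bbar_R * lbar_R))
    (fun t => by rw [hH, hH]; ring)
  have best_response : c_lam * (alpha_t - lam_S) = beta * lam_I * pi_I * (y_S - y_I) := by
    refine mul_left_cancel₀ hpiS.ne' ?_
    linear_combination hα
  refine ⟨?_, ?_, ?_, by linear_combination hI⟩
  · refine mul_left_cancel₀ hbR.ne' ?_
    linear_combination hR
  · field_simp
    linear_combination best_response
  · field_simp
    linear_combination hS + pi_S * best_response

/-- at any critical point `(alpha_t, lam_S, lam_I, lam_R)` of the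
principal's Hamiltonian `H_tilde` in the semi-explicitly solvable SIR
Stackelberg game (i.e. a point where all four partial derivatives vanish),
the explicit relations (i)–(iv) hold:
(i) `lam_R = lbar_R`;
(ii) `alpha_t = lam_S + (β lam_I π_I / c_lam)(y_S - y_I)`;
(iii) `lam_S = lbar_S + (β / bbar_S) lam_I (y_S - y_I) π_I π_S`;
(iv) `bbar_I (lam_I - lbar_I) = - β alpha_t (y_I - y_S) π_I π_S`. -/
theorem sir_stackelberg_critical_point_relations
    (beta c_lam bbar_S bbar_I bbar_R c_Inf c_I gamma eta : ℝ)
    (hbeta : 0 ≤ beta) (hclam : 0 < c_lam)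
    (hbS : 0 < bbar_S) (hbI : 0 ≤ bbar_I) (hbR : 0 < bbar_R)
    (hcInf : 0 ≤ c_Inf) (hcI : 0 ≤ c_I) (hgamma : 0 ≤ gamma) (heta : 0 ≤ eta)
    (lbar_S lbar_I lbar_R : ℝ)
    (pi_S pi_I pi_R y_S y_I y_R : ℝ) (hpiS : 0 < pi_S)
    (H : ℝ → ℝ → ℝ → ℝ → ℝ)
    (hH : ∀ alpha lam_S lam_I lam_R : ℝ,
      H alpha lam_S lam_I lam_R
        = (y_I - y_S) * beta * lam_I * alpha * pi_I * pi_S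
          + (y_R - y_I) * gamma + (y_S - y_R) * eta + c_Inf * pi_I ^ 2
          + (bbar_S / 2) * (lam_S - lbar_S) ^ 2
          + (bbar_I / 2) * (lam_I - lbar_I) ^ 2
          + (bbar_R / 2) * (lam_R - lbar_R) ^ 2
          + (c_lam / 2) * (lam_S - alpha) ^ 2 * pi_S + c_I * pi_I)
    (alpha_t lam_S lam_I lam_R : ℝ)
    (hcrit1 : HasDerivAt (fun t => H t lam_S lam_I lam_R) 0 alpha_t)
    (hcrit2 : HasDerivAt (fun t => H alpha_t t lam_I lam_R) 0 lam_S)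
    (hcrit3 : HasDerivAt (fun t => H alpha_t lam_S t lam_R) 0 lam_I)
    (hcrit4 : HasDerivAt (fun t => H alpha_t lam_S lam_I t) 0 lam_R) :
    lam_R = lbar_R ∧
    alpha_t = lam_S + (beta * lam_I * pi_I / c_lam) * (y_S - y_I) ∧
    lam_S = lbar_S + (beta / bbar_S) * lam_I * (y_S - y_I) * pi_I * pi_S ∧
    bbar_I * (lam_I - lbar_I) = - (beta * alpha_t * (y_I - y_S) * pi_I * pi_S) :=
  sir_stackelberg_critical_point_relations_general beta c_lam bbar_S bbar_I bbar_R c_Inf c_I gamma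
    eta hclam hbS hbR lbar_S lbar_I lbar_R pi_S pi_I y_S y_I y_R hpiS H hH alpha_t lam_S lam_I lam_R
    hcrit1 hcrit2 hcrit3 hcrit4
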